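/- The direct product of any family of absolutely pure S-acts is absolutely pure. -/

import Mathlib

universe u

open Cardinal

/-- A (finite-system component) equation over an `S`-act `B` in `n` unknowns:
`xᵢ r = xᵢ s`, `xᵢ r = xⱼ s`, or `xᵢ r = a` with `a ∈ B`. -/
inductive ActEq (S : Type u) (B : Type u) (n : ℕ) where
  | xrxs (i : Fin n) (r s : S)
  | xrys (i j : Fin n) (r s : S)
  | xra (i : Fin n) (r : S) (a : B)

/-- An assignment `v` of the unknowns satisfies an equation. -/
def SatEq {S B : Type u} [Monoid S] [MulAction S B] {n : ℕ} (v : Fin n → B) :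
    ActEq S B n → Prop
  | .xrxs i r s => r • v i = s • v i
  | .xrys i j r s => r • v i = s • v j
  | .xra i r a => r • v i = a

/-- The constants of the equation lie in the subset `U`. -/
def ConstIn {S B : Type u} (U : Set B) {n : ℕ} : ActEq S B n → Prop
  | .xra _ _ a => a ∈ U
  | _ => True

/-- `U` is a pure subset of the `S`-act `B`: every finite system of equations with
constants from `U` that is solvable in `B` is solvable in `U`. -/
def IsPure (S : Type u) {B : Type u} [Monoid S] [MulAction S B] (U : Set B) : Prop :=
  ∀ (n : ℕ) (E : List (ActEq S B n)), (∀ e ∈ E, ConstIn U e) →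
    (∃ v : Fin n → B, ∀ e ∈ E, SatEq v e) →
    ∃ v : Fin n → B, (∀ i, v i ∈ U) ∧ ∀ e ∈ E, SatEq v e

/-- `φ : A → C` is a `𝒞`-preenvelope of `A`. -/
def IsPreenvelope {S : Type u} [Monoid S] (𝒞 : (C : Type u) → [MulAction S C] → Prop)
    (A : Type u) [MulAction S A] (C : Type u) [MulAction S C] (φ : A →[S] C) : Prop :=
  𝒞 C ∧ ∀ (C' : Type u) [MulAction S C'], 𝒞 C' →
    ∀ f : A →[S] C', ∃ g : C →[S] C', ∀ a, g (φ a) = f a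

/-- `A` has a `𝒞`-preenvelope. -/
def HasPreenvelope {S : Type u} [Monoid S] (𝒞 : (C : Type u) → [MulAction S C] → Prop)
    (A : Type u) [MulAction S A] : Prop :=
  ∃ (C : Type u) (inst : MulAction S C), letI := inst
    ∃ φ : A →[S] C, IsPreenvelope 𝒞 A C φ

/-- An injective `S`-act: maps into it extend along all embeddings of acts. -/
def IsInjectiveAct (S : Type u) [Monoid S] (E : Type u) [MulAction S E] : Prop :=
  ∀ (A B : Type u) [MulAction S A] [MulAction S B] (i : A →[S] B),
    Function.Injective i → ∀ f : A →[S] E, ∃ g : B →[S] E, ∀ a, g (i a) = f a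

/-- `A` is absolutely pure: it is pure in every act containing it. -/
def IsAbsolutelyPure (S : Type u) [Monoid S] (A : Type u) [MulAction S A] : Prop :=
  ∀ (B : Type u) [MulAction S B] (i : A →[S] B), Function.Injective i →
    IsPure S (Set.range i)

/-- The right ideal of `S` generated by a set `F` (in the act convention `s • t = s * t`). -/
def genIdeal {S : Type u} [Monoid S] (F : Set S) : Set S :=
  {x | ∃ s : S, ∃ f ∈ F, x = s * f}

theorem genIdeal_smul {S : Type u} [Monoid S] (F : Set S) (s : S) {x : S}
    (hx : x ∈ genIdeal F) : s * x ∈ genIdeal F := by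
  obtain ⟨t, f, hf, rfl⟩ := hx; exact ⟨s * t, f, hf, (mul_assoc s t f).symm⟩

/-- A map `h` defined on an ideal `I ⊆ S` extends to an act map `S → A`. -/
def ExtendsHom {S : Type u} [Monoid S] {A : Type u} [MulAction S A] (I : Set S)
    (h : I → A) : Prop :=
  ∃ g : S → A, (∀ s t : S, g (s * t) = s • g t) ∧ ∀ x : I, g x = h x

/-- `A` is weakly f-injective: homs from finitely generated right ideals extend to `S`. -/
def IsWeaklyFInjective (S : Type u) [Monoid S] (A : Type u) [MulAction S A] : Prop :=
  ∀ (F : Finset S) (h : genIdeal (F : Set S) → A),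
    (∀ (s : S) (x : genIdeal (F : Set S)),
      h ⟨s * ↑x, genIdeal_smul _ s x.2⟩ = s • h x) →
    ExtendsHom (genIdeal (F : Set S)) h

/-- `A` is weakly p-injective: homs from principal right ideals extend to `S`. -/
def IsWeaklyPInjective (S : Type u) [Monoid S] (A : Type u) [MulAction S A] : Prop :=
  ∀ (t : S) (h : genIdeal {t} → A),
    (∀ (s : S) (x : genIdeal {t}),
      h ⟨s * ↑x, genIdeal_smul _ s x.2⟩ = s • h x) →
    ExtendsHom (genIdeal {t}) h

/-!
For each index `k`, push the embedding `i : (∀ k, C k) → B` out along the projection onto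
`C k`. `C k` embeds into the pushout, and the image there of a solution in `B` solves the system
projected to the `k`-th coordinate, so absolute purity of `C k` solves that system in `C k`. The
coordinatewise solutions assemble into a solution in the product, whose image under `i` is the
required one.
-/

open Function

namespace ActEq

variable {S B C D : Type u} {n : ℕ}

def map (f : B → C) : ActEq S B n → ActEq S C n
  | xrxs j r s => xrxs j r s
  | xrys j j' r s => xrys j j' r s
  | xra j r a => xra j r (f a)

theorem map_comp (f : B → C) (g : C → D) :
    map (S := S) (n := n) g ∘ map f = map (g ∘ f) := by
  funext e
  cases e <;> rfl

theorem constIn_range_map (f : B → C) (e : ActEq S B n) : ConstIn (Set.range f) (e.map f) := by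
  cases e <;> simp [map, ConstIn]

theorem exists_map_eq {f : B → C} {e : ActEq S C n} (he : ConstIn (Set.range f) e) :
    ∃ e₀ : ActEq S B n, e₀.map f = e := by
  cases e with
  | xrxs j r s => exact ⟨xrxs j r s, rfl⟩
  | xrys j j' r s => exact ⟨xrys j j' r s, rfl⟩
  | xra j r a => obtain ⟨b, rfl⟩ := he; exact ⟨xra j r b, rfl⟩

theorem exists_list_map_eq {f : B → C} {E : List (ActEq S C n)}
    (hE : ∀ e ∈ E, ConstIn (Set.range f) e) :
    ∃ E₀ : List (ActEq S B n), E₀.map (map f) = E := by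
  induction E with
  | nil => exact ⟨[], rfl⟩
  | cons e E ih =>
    obtain ⟨e₀, rfl⟩ := exists_map_eq (hE e List.mem_cons_self)
    obtain ⟨E₀, rfl⟩ := ih fun e he => hE e (List.mem_cons_of_mem _ he)
    exact ⟨e₀ :: E₀, rfl⟩

end ActEq

section Solutions

variable {S B C : Type u} [Monoid S] [MulAction S B] [MulAction S C] {n : ℕ}

theorem SatEq.map (f : B →[S] C) {v : Fin n → B} {e : ActEq S B n} (h : SatEq v e) :
    SatEq (f ∘ v) (e.map f) := by
  cases e <;> simp only [SatEq, ActEq.map, comp_apply, ← map_smul] at h ⊢ <;> rw [h]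

theorem satEq_map_iff {f : B →[S] C} (hf : Injective f) {v : Fin n → B} {e : ActEq S B n} :
    SatEq (f ∘ v) (e.map f) ↔ SatEq v e := by
  cases e <;> simp only [SatEq, ActEq.map, comp_apply, ← map_smul, hf.eq_iff]

theorem satEq_pi_iff {ι : Type u} {C : ι → Type u} [∀ k, MulAction S (C k)]
    {v : Fin n → ∀ k, C k} {e : ActEq S (∀ k, C k) n} :
    SatEq v e ↔ ∀ k, SatEq (fun j => v j k) (e.map fun x => x k) := by
  cases e <;> simp only [SatEq, ActEq.map, funext_iff, Pi.smul_apply]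

def HasSolution (E : List (ActEq S B n)) : Prop :=
  ∃ v : Fin n → B, ∀ e ∈ E, SatEq v e

theorem HasSolution.map (f : B →[S] C) {E : List (ActEq S B n)} (h : HasSolution E) :
    HasSolution (E.map (ActEq.map f)) := by
  obtain ⟨v, hv⟩ := h
  exact ⟨f ∘ v, by simpa using fun e he => (hv e he).map f⟩

theorem hasSolution_of_forall_map_eval {ι : Type u} {C : ι → Type u} [∀ k, MulAction S (C k)]
    {E : List (ActEq S (∀ k, C k) n)}
    (h : ∀ k, HasSolution (E.map (ActEq.map fun x => x k))) : HasSolution E := by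
  choose v hv using h
  exact ⟨fun j k => v k j, fun e he => satEq_pi_iff.2 fun k => hv k _ (List.mem_map_of_mem he)⟩

end Solutions

section Pushout

variable {S A B X : Type u} [Monoid S] [MulAction S A] [MulAction S B] [MulAction S X]

/-- Injectivity of `g` makes this a normal form for `A ⊕ B` modulo `inr (g x) ~ inl (p x)`. -/
noncomputable def pushoutNormal (g : X → B) (p : X → A) : A ⊕ B → A ⊕ B :=
  Sum.elim Sum.inl (extend g (Sum.inl ∘ p) Sum.inr)

theorem pushoutNormal_smul {g : X →[S] B} (hg : Injective g) (p : X →[S] A) (s : S)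
    (u : A ⊕ B) :
    pushoutNormal g p (s • u) = pushoutNormal g p (s • pushoutNormal g p u) := by
  rcases u with a | b
  · rfl
  by_cases hb : ∃ x, g x = b
  · obtain ⟨x, rfl⟩ := hb
    simp [pushoutNormal, ← map_smul, hg.extend_apply]
  · simp [pushoutNormal, extend_apply' _ _ _ hb]

theorem exists_pushout_of_injective {g : X →[S] B} (hg : Injective g) (p : X →[S] A) :
    ∃ (P : Type u) (_ : MulAction S P) (a : A →[S] P) (b : B →[S] P),
      Injective a ∧ ∀ x, b (g x) = a (p x) := by
  let r := Setoid.ker (pushoutNormal g p)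
  let _ : SMul S (Quotient r) := ⟨fun s => Quotient.map (s • ·) fun u v h => by
    change pushoutNormal g p _ = pushoutNormal g p _ at h ⊢
    rw [pushoutNormal_smul hg, h, ← pushoutNormal_smul hg]⟩
  let _ : MulAction S (Quotient r) :=
    { one_smul := Quotient.ind fun u => congrArg _ (one_smul S u)
      mul_smul := fun s t => Quotient.ind fun u => congrArg _ (mul_smul s t u) }
  refine ⟨Quotient r, inferInstance, ⟨fun a => ⟦.inl a⟧, fun _ _ => rfl⟩,
    ⟨fun b => ⟦.inr b⟧, fun _ _ => rfl⟩, fun a a' h => ?_, fun x => ?_⟩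
  · exact Sum.inl_injective (Quotient.exact h)
  · exact Quotient.sound (by simp [r, Setoid.ker_def, pushoutNormal, hg.extend_apply])

end Pushout

theorem IsAbsolutelyPure.hasSolution_of_map {S A P : Type u} [Monoid S] [MulAction S A]
    [MulAction S P] (hA : IsAbsolutelyPure S A) {j : A →[S] P} (hj : Injective j) {n : ℕ}
    {E : List (ActEq S A n)} (h : HasSolution (E.map (ActEq.map j))) : HasSolution E := by
  obtain ⟨w, hw, hwE⟩ := hA P j hj n _ (by simp [ActEq.constIn_range_map]) h
  choose u hu using hw
  obtain rfl : j ∘ u = w := funext hu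
  exact ⟨u, fun e he => (satEq_map_iff hj).1 (hwE _ (List.mem_map_of_mem he))⟩

/-- a product of absolutely pure acts is absolutely pure. -/
theorem prod_absolutelyPure {S : Type u} [Monoid S]
    (ι : Type u) (C : ι → Type u) [∀ i, MulAction S (C i)]
    (h : ∀ i, IsAbsolutelyPure S (C i)) :
    IsAbsolutelyPure S ((i : ι) → C i) := by
  intro B _ i hi n E hE hsol
  obtain ⟨E₀, rfl⟩ := ActEq.exists_list_map_eq hE
  suffices HasSolution E₀ by
    obtain ⟨u, hu⟩ := this
    exact ⟨i ∘ u, fun _ => ⟨_, rfl⟩, by simpa using fun e he => (hu e he).map i⟩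
  refine hasSolution_of_forall_map_eval fun k => ?_
  obtain ⟨P, _, a, b, ha, hab⟩ :=
    exists_pushout_of_injective hi ⟨fun x => x k, fun _ _ => rfl⟩
  refine (h k).hasSolution_of_map ha ?_
  have hba : ⇑b ∘ ⇑i = ⇑a ∘ fun x => x k := funext hab
  simpa [ActEq.map_comp, hba] using HasSolution.map b hsol
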